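/- arXiv:2402.08628 — 4 statements merged into one kernel-verified Lean document; each statement's English description precedes it below -/
import Mathlib

section
/- Let X_1, …, X_N be independent ℝ^d-valued random variables with laws μ_1, …, μ_N, let ξ_1, …, ξ_N ∈ [0,1] with N_w := Σ_{j=1}^N ξ_j > 0, and set ν := N_w^{-1} Σ_j ξ_j δ_{X_j} and μ̄ := N_w^{-1} Σ_j ξ_j μ_j. Then for every Borel set A ⊆ ℝ^d one has E[ |ν(A) − μ̄(A)| ] ≤ min{ 2 μ̄(A) , ( μ̄(A) / N_w )^{1/2} }. -/
/-
With `Y_j = 1_A(X_j)` and `S = ∑ ξ_j Y_j`, one has `N_w ν(A) = S` and `N_w μ̄(A) = E S`.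
Since `S ≥ 0`, `E|S - E S| ≤ 2 E S`. By independence `Var S = ∑ Var(ξ_j Y_j)`, and
`Var(ξ_j Y_j) ≤ E (ξ_j Y_j)² = ξ_j² E Y_j ≤ ξ_j E Y_j`, so `Var S ≤ E S`;
finally `E|S - E S| ≤ √(Var S)`.
-/

open MeasureTheory ENNReal Set Filter ProbabilityTheory

noncomputable section

/-- The state space `ℝ^d`. -/
abbrev Ed (d : ℕ) : Type := EuclideanSpace ℝ (Fin d)

/-- The weighted empirical measure `N_w⁻¹ ∑_j ξ_j δ_{x_j}` with `N_w = ∑_j ξ_j`. -/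
def wEmp {d N : ℕ} (ξ : Fin N → ℝ) (x : Fin N → Ed d) : Measure (Ed d) :=
  (ENNReal.ofReal (∑ j, ξ j))⁻¹ • ∑ j, ENNReal.ofReal (ξ j) • Measure.dirac (x j)

/-- The weighted mixture `N_w⁻¹ ∑_j ξ_j μ_j` of the laws, with `N_w = ∑_j ξ_j`. -/
def wMix {d N : ℕ} (ξ : Fin N → ℝ) (μ : Fin N → Measure (Ed d)) : Measure (Ed d) :=
  (ENNReal.ofReal (∑ j, ξ j))⁻¹ • ∑ j, ENNReal.ofReal (ξ j) • μ j

section Moments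

variable {Ω : Type*} [MeasurableSpace Ω] {P : Measure Ω} [IsProbabilityMeasure P] {f : Ω → ℝ}

theorem integral_abs_sub_integral_le_two_mul_integral (hf0 : 0 ≤ᵐ[P] f) (hf : Integrable f P) :
    ∫ ω, |f ω - ∫ ω', f ω' ∂P| ∂P ≤ 2 * ∫ ω, f ω ∂P := by
  have hmean : 0 ≤ ∫ ω, f ω ∂P := integral_nonneg_of_ae hf0
  calc ∫ ω, |f ω - ∫ ω', f ω' ∂P| ∂P ≤ ∫ ω, (f ω + ∫ ω', f ω' ∂P) ∂P := by
        refine integral_mono_ae (hf.sub (integrable_const _)).abs (hf.add (integrable_const _)) ?_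
        filter_upwards [hf0] with ω (hω : 0 ≤ f ω)
        exact abs_sub_le_iff.2 ⟨by linarith, by linarith⟩
    _ = 2 * ∫ ω, f ω ∂P := by
        rw [integral_add hf (integrable_const _), integral_const, probReal_univ, one_smul]
        ring

theorem integral_abs_sub_integral_le_sqrt_variance (hf : MemLp f 2 P) :
    ∫ ω, |f ω - ∫ ω', f ω' ∂P| ∂P ≤ √(variance f P) := by
  set g : Ω → ℝ := fun ω => |f ω - ∫ ω', f ω' ∂P|
  have hg : MemLp g 2 P := (hf.sub (memLp_const _)).abs
  -- `0 ≤ Var[g] = E[g²] - E[g]²`, and `E[g²]` is the variance of `f`.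
  have hsq : (∫ ω, g ω ∂P) ^ 2 ≤ variance f P := by
    have := variance_nonneg g P
    rw [variance_eq_sub hg] at this
    rw [variance_eq_integral hf.aemeasurable]
    simpa [g, sq_abs] using this
  exact Real.le_sqrt_of_sq_le hsq

theorem variance_indicator_const_le {c : ℝ} (hc : c ∈ Icc (0 : ℝ) 1) {s : Set Ω}
    (hs : MeasurableSet s) : variance (s.indicator fun _ => c) P ≤ c * P.real s := by
  have hsq : (s.indicator fun _ => c) ^ 2 = s.indicator fun _ => c ^ 2 := by
    ext ω
    by_cases hω : ω ∈ s <;> simp [hω]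
  calc variance (s.indicator fun _ => c) P ≤ P[(s.indicator fun _ => c) ^ 2] :=
        variance_le_expectation_sq ((measurable_const.indicator hs).aestronglyMeasurable)
    _ = c ^ 2 * P.real s := by rw [hsq, integral_indicator_const _ hs, smul_eq_mul, mul_comm]
    _ ≤ c * P.real s := by
        gcongr
        nlinarith [hc.1, hc.2]

variable {E ι : Type*} [MeasurableSpace E] [Fintype ι] {X : ι → Ω → E} {A : Set E}

theorem integral_sum_indicator_preimage (hX : ∀ i, Measurable (X i)) (hA : MeasurableSet A)
    (c : ι → ℝ) :
    ∫ ω, ∑ i, (X i ⁻¹' A).indicator (fun _ => c i) ω ∂P = ∑ i, c i * P.real (X i ⁻¹' A) := by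
  rw [integral_finsetSum _ fun i _ => (integrable_const _).indicator (hX i hA)]
  refine Finset.sum_congr rfl fun i _ => ?_
  rw [integral_indicator_const _ (hX i hA), smul_eq_mul, mul_comm]

theorem variance_sum_indicator_preimage_le (hX : ∀ i, Measurable (X i)) (hindep : iIndepFun X P)
    (hA : MeasurableSet A) {c : ι → ℝ} (hc : ∀ i, c i ∈ Icc (0 : ℝ) 1) :
    variance (fun ω => ∑ i, (X i ⁻¹' A).indicator (fun _ => c i) ω) P ≤
      ∑ i, c i * P.real (X i ⁻¹' A) := by
  set Y : ι → Ω → ℝ := fun i => (X i ⁻¹' A).indicator fun _ => c i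
  have hYindep : iIndepFun Y P :=
    hindep.comp (fun i => A.indicator fun _ => c i) fun _ => measurable_const.indicator hA
  have hsum : (fun ω => ∑ i, Y i ω) = ∑ i, Y i := by
    ext ω
    simp
  rw [hsum, IndepFun.variance_sum (fun i _ => (memLp_const _).indicator (hX i hA))
    fun i _ j _ hij => hYindep.indepFun hij]
  exact Finset.sum_le_sum fun i _ => variance_indicator_const_le (hc i) (hX i hA)

end Moments

theorem wMix_apply_toReal {d N : ℕ} {ξ : Fin N → ℝ} (hξ : ∀ j, 0 ≤ ξ j)
    (μ : Fin N → Measure (Ed d)) [∀ j, IsFiniteMeasure (μ j)] (A : Set (Ed d)) :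
    (wMix ξ μ A).toReal = (∑ j, ξ j)⁻¹ * ∑ j, ξ j * (μ j).real A := by
  simp only [wMix, Measure.smul_apply, Measure.finsetSum_apply, smul_eq_mul]
  rw [ENNReal.toReal_mul, ENNReal.toReal_inv,
    ENNReal.toReal_ofReal (Finset.sum_nonneg fun j _ => hξ j),
    ENNReal.toReal_sum fun j _ => ENNReal.mul_ne_top ofReal_ne_top (measure_ne_top _ _)]
  simp only [ENNReal.toReal_mul, ENNReal.toReal_ofReal (hξ _), Measure.real]

theorem wEmp_apply_toReal {d N : ℕ} {ξ : Fin N → ℝ} (hξ : ∀ j, 0 ≤ ξ j) (x : Fin N → Ed d)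
    (A : Set (Ed d)) :
    (wEmp ξ x A).toReal = (∑ j, ξ j)⁻¹ * ∑ j, A.indicator (fun _ => ξ j) (x j) := by
  rw [wEmp, ← wMix, wMix_apply_toReal hξ]
  congr 1
  refine Finset.sum_congr rfl fun j _ => ?_
  by_cases hx : x j ∈ A <;> simp [hx, Measure.real, Measure.dirac_apply]

theorem stmt_4_general {d N : ℕ} {Ω : Type} [MeasurableSpace Ω] (P : Measure Ω)
    [IsProbabilityMeasure P]
    (X : Fin N → Ω → Ed d) (hXmeas : ∀ j, Measurable (X j))
    (hindep : iIndepFun X P)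
    (μ : Fin N → Measure (Ed d)) (hlaw : ∀ j, P.map (X j) = μ j)
    (ξ : Fin N → ℝ) (hξ : ∀ j, ξ j ∈ Set.Icc (0:ℝ) 1)
    (A : Set (Ed d)) (hA : MeasurableSet A) :
    ∫ ω, |((wEmp ξ fun j => X j ω) A).toReal - ((wMix ξ μ) A).toReal| ∂P ≤
      min (2 * ((wMix ξ μ) A).toReal)
        (Real.sqrt (((wMix ξ μ) A).toReal / (∑ j, ξ j))) := by
  obtain rfl : μ = fun j => P.map (X j) := funext fun j => (hlaw j).symm
  have hξ0 : ∀ j, 0 ≤ ξ j := fun j => (hξ j).1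
  set Nw := ∑ j, ξ j
  set S : Ω → ℝ := fun ω => ∑ j, (X j ⁻¹' A).indicator (fun _ => ξ j) ω
  have hmean : ∫ ω, S ω ∂P = ∑ j, ξ j * P.real (X j ⁻¹' A) :=
    integral_sum_indicator_preimage hXmeas hA ξ
  have hmix : (wMix ξ (fun j => P.map (X j)) A).toReal = Nw⁻¹ * ∫ ω, S ω ∂P := by
    simp only [wMix_apply_toReal hξ0, map_measureReal_apply (hXmeas _) hA, hmean, Nw]
  have hemp : ∀ ω, (wEmp ξ (fun j => X j ω) A).toReal = Nw⁻¹ * S ω :=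
    fun ω => wEmp_apply_toReal hξ0 _ A
  have hNw : 0 ≤ Nw⁻¹ := inv_nonneg.2 (Finset.sum_nonneg fun j _ => hξ0 j)
  have hSmem : MemLp S 2 P :=
    memLp_finsetSum _ fun j _ => (memLp_const _).indicator (hXmeas j hA)
  simp_rw [hemp, hmix, ← mul_sub, abs_mul, abs_of_nonneg hNw, integral_const_mul]
  refine le_min ?_ ?_
  · have hS0 : 0 ≤ᵐ[P] S := Eventually.of_forall fun ω =>
      Finset.sum_nonneg fun j _ => indicator_nonneg (fun _ _ => hξ0 j) ω
    calc _ ≤ Nw⁻¹ * (2 * ∫ ω, S ω ∂P) := by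
          gcongr
          exact integral_abs_sub_integral_le_two_mul_integral hS0 (hSmem.integrable one_le_two)
      _ = _ := by ring
  · calc _ ≤ Nw⁻¹ * √(∫ ω, S ω ∂P) := by
          gcongr
          refine (integral_abs_sub_integral_le_sqrt_variance hSmem).trans (Real.sqrt_le_sqrt ?_)
          rw [hmean]
          exact variance_sum_indicator_preimage_le hXmeas hindep hA hξ
      _ = √((Nw⁻¹ * ∫ ω, S ω ∂P) / Nw) := by
          rw [show (Nw⁻¹ * ∫ ω, S ω ∂P) / Nw = Nw⁻¹ ^ 2 * ∫ ω, S ω ∂P by ring,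
            Real.sqrt_mul (sq_nonneg _), Real.sqrt_sq hNw]

/-- mean absolute deviation of the weighted empirical measure of independent
samples from the weighted mixture of their laws, on any Borel set `A`. -/
theorem stmt_4 {d N : ℕ} {Ω : Type} [MeasurableSpace Ω] (P : Measure Ω)
    [IsProbabilityMeasure P]
    (X : Fin N → Ω → Ed d) (hXmeas : ∀ j, Measurable (X j))
    (hindep : iIndepFun X P)
    (μ : Fin N → Measure (Ed d)) (hlaw : ∀ j, P.map (X j) = μ j)
    (ξ : Fin N → ℝ) (hξ : ∀ j, ξ j ∈ Set.Icc (0:ℝ) 1) (hNw : 0 < ∑ j, ξ j)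
    (A : Set (Ed d)) (hA : MeasurableSet A) :
    ∫ ω, |((wEmp ξ fun j => X j ω) A).toReal - ((wMix ξ μ) A).toReal| ∂P ≤
      min (2 * ((wMix ξ μ) A).toReal)
        (Real.sqrt (((wMix ξ μ) A).toReal / (∑ j, ξ j))) :=
  stmt_4_general P X hXmeas hindep μ hlaw ξ hξ A hA

end
end

section
/- Let G and (G_N)_{N∈ℕ} be graphons such that ‖G(u,·)‖₁ > 0 for a.e. u ∈ [0,1], ∫₀¹ ‖G(u,·)‖₁^{−1} du < ∞, and ‖G_N − G‖_□ → 0 as N → ∞. For each N define Ã_N := { u ∈ [0,1] : ‖G_N(u,·)‖₁ ≥ ½ ‖G(u,·)‖₁ }. Then (i) sup_N ∫_{Ã_N} ‖G_N(u,·)‖₁^{−1} du ≤ 2 ∫₀¹ ‖G(u,·)‖₁^{−1} du < ∞, and (ii) the Lebesgue measure of the complement [0,1] ∖ Ã_N tends to 0 as N → ∞. -/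
open MeasureTheory ENNReal Set Filter

noncomputable section

/-- The degree function `‖G(u,·)‖₁ = ∫₀¹ G(u,v) dv` of a graphon. -/
def deg (G : ℝ → ℝ → ℝ) (u : ℝ) : ℝ := ∫ v in Set.Icc (0:ℝ) 1, G u v

/-- A graphon: a symmetric measurable function `[0,1]² → [0,1]`
(represented as a total function on `ℝ²`). -/
structure IsGraphon (G : ℝ → ℝ → ℝ) : Prop where
  measurable : Measurable (Function.uncurry G)
  symm : ∀ u v, G u v = G v u
  mem_Icc : ∀ u ∈ Set.Icc (0:ℝ) 1, ∀ v ∈ Set.Icc (0:ℝ) 1, G u v ∈ Set.Icc (0:ℝ) 1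

/-- The class `M(ℝ^d)`: families `(μ^u)_{u∈[0,1]}` of probability measures with
setwise measurable dependence on `u` and uniformly bounded second moments. -/
structure MemM (d : ℕ) (μ : ℝ → Measure (Ed d)) : Prop where
  prob : ∀ u ∈ Set.Icc (0:ℝ) 1, IsProbabilityMeasure (μ u)
  meas : ∀ B : Set (Ed d), MeasurableSet B → Measurable fun u => μ u B
  moment : (⨆ u ∈ Set.Icc (0:ℝ) 1, ∫⁻ x, (‖x‖₊ : ℝ≥0∞) ^ 2 ∂(μ u)) < ⊤

/-- The graphon-averaged measure `[Gμ]^u = ‖G(u,·)‖₁⁻¹ ∫₀¹ G(u,v) μ^v dv`. -/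
def graphonAvg {d : ℕ} (G : ℝ → ℝ → ℝ) (μ : ℝ → Measure (Ed d)) (u : ℝ) :
    Measure (Ed d) :=
  Measure.bind
    ((volume.restrict (Set.Icc (0:ℝ) 1)).withDensity
      fun v => ENNReal.ofReal (G u v) / ENNReal.ofReal (deg G u)) μ

/-- The cut norm `‖F‖_□ = sup_{S,S' ⊆ [0,1] measurable} |∫_{S×S'} F(u,v) du dv|`. -/
def cutNorm (F : ℝ → ℝ → ℝ) : ℝ :=
  ⨆ (S : Set ℝ) (_ : MeasurableSet S) (S' : Set ℝ) (_ : MeasurableSet S'),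
    |∫ u in Set.Icc (0:ℝ) 1 ∩ S, ∫ v in Set.Icc (0:ℝ) 1 ∩ S', F u v|

/-!
On `Ã_N` the bound `deg G_N ≥ deg G / 2` gives (i) pointwise. On the complement `B_N` one has
`deg G ≤ 2 (deg G - deg G_N)`, and integrating over `B_N × [0,1]` shows
`∫_{B_N} deg G ≤ 2 ‖G_N - G‖_□ → 0`. Since `deg G > 0` a.e., Lebesgue measure on `[0,1]` has the
density `(deg G)⁻¹` with respect to `deg G · λ`, so absolute continuity of the integral of that
density turns `∫_{B_N} deg G → 0` into `λ(B_N) → 0`.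
-/

section Measure

variable {α : Type*} [MeasurableSpace α] {μ : Measure α}

theorem tendsto_measure_zero_of_tendsto_setLIntegral_zero [IsFiniteMeasure μ] {f : α → ℝ≥0∞}
    (hf : AEMeasurable f μ) (hf_ne_zero : ∀ᵐ x ∂μ, f x ≠ 0) (hf_ne_top : ∀ᵐ x ∂μ, f x ≠ ∞)
    {ι : Type*} {l : Filter ι} {s : ι → Set α}
    (h : Tendsto (fun i => ∫⁻ x in s i, f x ∂μ) l (nhds 0)) :
    Tendsto (μ ∘ s) l (nhds 0) := by
  set ν := μ.withDensity f
  have hμ : ν.withDensity (fun x => (f x)⁻¹) = μ := withDensity_inv_same₀ hf hf_ne_zero hf_ne_top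
  have hμs : μ ∘ s = fun i => ∫⁻ x in s i, (f x)⁻¹ ∂ν := by
    ext1 i
    rw [Function.comp_apply, ← withDensity_apply', hμ]
  have hfin : ∫⁻ x, (f x)⁻¹ ∂ν ≠ ∞ := by
    rw [← setLIntegral_univ, ← withDensity_apply', hμ]
    exact measure_ne_top μ univ
  rw [hμs]
  refine tendsto_setLIntegral_zero hfin ?_
  simpa only [Function.comp_def, ν, withDensity_apply'] using h

theorem setLIntegral_inv_ofReal_le_two_mul {f g : α → ℝ} {s t : Set α} (hs : MeasurableSet s)
    (hst : s ⊆ t) (hfg : ∀ x ∈ s, f x / 2 ≤ g x) :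
    ∫⁻ x in s, (ENNReal.ofReal (g x))⁻¹ ∂μ ≤ 2 * ∫⁻ x in t, (ENNReal.ofReal (f x))⁻¹ ∂μ :=
  calc ∫⁻ x in s, (ENNReal.ofReal (g x))⁻¹ ∂μ
      ≤ ∫⁻ x in s, 2 * (ENNReal.ofReal (f x))⁻¹ ∂μ := by
        refine setLIntegral_mono' hs fun x hx => ?_
        calc (ENNReal.ofReal (g x))⁻¹ ≤ (ENNReal.ofReal (f x / 2))⁻¹ :=
              ENNReal.inv_le_inv.mpr (ENNReal.ofReal_le_ofReal (hfg x hx))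
          _ = 2 * (ENNReal.ofReal (f x))⁻¹ := by
              rw [ENNReal.ofReal_div_of_pos two_pos, ENNReal.inv_div (by simp) (by simp),
                div_eq_mul_inv, ENNReal.ofReal_ofNat, mul_comm]
    _ ≤ ∫⁻ x in t, 2 * (ENNReal.ofReal (f x))⁻¹ ∂μ := lintegral_mono_set hst
    _ = 2 * ∫⁻ x in t, (ENNReal.ofReal (f x))⁻¹ ∂μ := lintegral_const_mul' 2 _ (by simp)

end Measure

theorem norm_setIntegral_le_of_subset_Icc {E : Type*} [NormedAddCommGroup E] [NormedSpace ℝ E]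
    {f : ℝ → E} {s : Set ℝ} (hs : s ⊆ Set.Icc 0 1) {C : ℝ} (hC : 0 ≤ C)
    (hf : ∀ x ∈ s, ‖f x‖ ≤ C) : ‖∫ x in s, f x‖ ≤ C := by
  have hvol : volume s ≤ 1 := (measure_mono hs).trans (by simp)
  calc ‖∫ x in s, f x‖ ≤ C * volume.real s :=
        norm_setIntegral_le_of_norm_le_const (hvol.trans_lt one_lt_top) hf
    _ ≤ C * 1 := by
        gcongr
        exact ENNReal.toReal_le_of_le_ofReal zero_le_one (by simpa using hvol)
    _ = C := mul_one C

theorem abs_setIntegral_setIntegral_le_cutNorm {F : ℝ → ℝ → ℝ} {C : ℝ}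
    (hF : ∀ u ∈ Set.Icc (0:ℝ) 1, ∀ v ∈ Set.Icc (0:ℝ) 1, |F u v| ≤ C)
    {S S' : Set ℝ} (hS : MeasurableSet S) (hS' : MeasurableSet S') :
    |∫ u in Set.Icc (0:ℝ) 1 ∩ S, ∫ v in Set.Icc (0:ℝ) 1 ∩ S', F u v| ≤ cutNorm F := by
  have hC : 0 ≤ C := (abs_nonneg _).trans (hF 0 (by simp) 0 (by simp))
  have hbound (T T' : Set ℝ) :
      |∫ u in Set.Icc (0:ℝ) 1 ∩ T, ∫ v in Set.Icc (0:ℝ) 1 ∩ T', F u v| ≤ C := by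
    rw [← Real.norm_eq_abs]
    exact norm_setIntegral_le_of_subset_Icc inter_subset_left hC fun u hu =>
      norm_setIntegral_le_of_subset_Icc inter_subset_left hC fun v hv => hF u hu.1 v hv.1
  have hbdd_inner : BddAbove (range fun T' : Set ℝ => ⨆ (_ : MeasurableSet T'),
      |∫ u in Set.Icc (0:ℝ) 1 ∩ S, ∫ v in Set.Icc (0:ℝ) 1 ∩ T', F u v|) :=
    ⟨C, forall_mem_range.2 fun T' => Real.iSup_le (fun _ => hbound S T') hC⟩
  have hbdd_outer : BddAbove (range fun T : Set ℝ =>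
      ⨆ (_ : MeasurableSet T) (T' : Set ℝ) (_ : MeasurableSet T'),
        |∫ u in Set.Icc (0:ℝ) 1 ∩ T, ∫ v in Set.Icc (0:ℝ) 1 ∩ T', F u v|) :=
    ⟨C, forall_mem_range.2 fun T => Real.iSup_le (fun _ => Real.iSup_le
      (fun T' => Real.iSup_le (fun _ => hbound T T') hC) hC) hC⟩
  calc |∫ u in Set.Icc (0:ℝ) 1 ∩ S, ∫ v in Set.Icc (0:ℝ) 1 ∩ S', F u v|
      = ⨆ (_ : MeasurableSet S'),
          |∫ u in Set.Icc (0:ℝ) 1 ∩ S, ∫ v in Set.Icc (0:ℝ) 1 ∩ S', F u v| := by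
        rw [ciSup_pos hS']
    _ ≤ ⨆ (T' : Set ℝ) (_ : MeasurableSet T'),
          |∫ u in Set.Icc (0:ℝ) 1 ∩ S, ∫ v in Set.Icc (0:ℝ) 1 ∩ T', F u v| :=
        le_ciSup hbdd_inner S'
    _ = ⨆ (_ : MeasurableSet S) (T' : Set ℝ) (_ : MeasurableSet T'),
          |∫ u in Set.Icc (0:ℝ) 1 ∩ S, ∫ v in Set.Icc (0:ℝ) 1 ∩ T', F u v| := by
        rw [ciSup_pos hS]
    _ ≤ cutNorm F := le_ciSup hbdd_outer S

theorem measurable_deg {G : ℝ → ℝ → ℝ} (hG : Measurable (Function.uncurry G)) :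
    Measurable (deg G) :=
  (hG.stronglyMeasurable.integral_prod_right (ν := volume.restrict (Set.Icc (0:ℝ) 1))).measurable

namespace IsGraphon

variable {G H : ℝ → ℝ → ℝ}

theorem abs_le_one (hG : IsGraphon G) {u v : ℝ} (hu : u ∈ Set.Icc (0:ℝ) 1)
    (hv : v ∈ Set.Icc (0:ℝ) 1) : |G u v| ≤ 1 :=
  abs_le.2 ⟨by linarith [(hG.mem_Icc u hu v hv).1], (hG.mem_Icc u hu v hv).2⟩

theorem integrableOn_Icc (hG : IsGraphon G) {u : ℝ} (hu : u ∈ Set.Icc (0:ℝ) 1) :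
    IntegrableOn (G u) (Set.Icc (0:ℝ) 1) :=
  Measure.integrableOn_of_bounded (by simp) hG.measurable.of_uncurry_left.aestronglyMeasurable
    (ae_restrict_of_forall_mem measurableSet_Icc fun _ hv => hG.abs_le_one hu hv)

theorem deg_mem_Icc (hG : IsGraphon G) {u : ℝ} (hu : u ∈ Set.Icc (0:ℝ) 1) :
    deg G u ∈ Set.Icc (0:ℝ) 1 := by
  refine ⟨setIntegral_nonneg measurableSet_Icc fun v hv => (hG.mem_Icc u hu v hv).1, ?_⟩
  calc deg G u ≤ ∫ _ in Set.Icc (0:ℝ) 1, (1:ℝ) :=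
        setIntegral_mono_on (hG.integrableOn_Icc hu) (integrable_const 1) measurableSet_Icc
          fun v hv => (hG.mem_Icc u hu v hv).2
    _ = 1 := by simp

theorem integrableOn_deg (hG : IsGraphon G) : IntegrableOn (deg G) (Set.Icc (0:ℝ) 1) :=
  Measure.integrableOn_of_bounded (M := 1) (by simp)
    (measurable_deg hG.measurable).aestronglyMeasurable
    (ae_restrict_of_forall_mem measurableSet_Icc fun _ hu =>
      abs_le.2 ⟨by linarith [(hG.deg_mem_Icc hu).1], (hG.deg_mem_Icc hu).2⟩)

theorem abs_setIntegral_deg_sub_le_cutNorm (hG : IsGraphon G) (hH : IsGraphon H) {S : Set ℝ}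
    (hS : MeasurableSet S) (hSI : S ⊆ Set.Icc (0:ℝ) 1) :
    |∫ u in S, (deg H u - deg G u)| ≤ cutNorm fun u v => H u v - G u v := by
  have hF : ∀ u ∈ Set.Icc (0:ℝ) 1, ∀ v ∈ Set.Icc (0:ℝ) 1, |H u v - G u v| ≤ 1 := by
    intro u hu v hv
    obtain ⟨hH0, hH1⟩ := hH.mem_Icc u hu v hv
    obtain ⟨hG0, hG1⟩ := hG.mem_Icc u hu v hv
    rw [abs_le]; constructor <;> linarith
  have h := abs_setIntegral_setIntegral_le_cutNorm hF hS MeasurableSet.univ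
  rw [inter_univ, inter_eq_self_of_subset_right hSI] at h
  refine (le_of_eq ?_).trans h
  congr 1
  refine setIntegral_congr_fun hS fun u hu => ?_
  exact (integral_sub (hH.integrableOn_Icc (hSI hu)) (hG.integrableOn_Icc (hSI hu))).symm

theorem setIntegral_deg_le_two_mul_cutNorm (hG : IsGraphon G) (hH : IsGraphon H) {S : Set ℝ}
    (hS : MeasurableSet S) (hSI : S ⊆ Set.Icc (0:ℝ) 1) (hHG : ∀ u ∈ S, deg H u ≤ deg G u / 2) :
    ∫ u in S, deg G u ≤ 2 * cutNorm fun u v => H u v - G u v := by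
  have hGS := hG.integrableOn_deg.mono_set hSI
  have hHS := hH.integrableOn_deg.mono_set hSI
  calc ∫ u in S, deg G u ≤ ∫ u in S, 2 * (deg G u - deg H u) :=
        setIntegral_mono_on hGS ((hGS.sub hHS).const_mul 2) hS fun u hu => by
          linarith [hHG u hu]
    _ = 2 * -∫ u in S, (deg H u - deg G u) := by
        rw [integral_const_mul, ← integral_neg]
        simp only [neg_sub]
    _ ≤ 2 * cutNorm fun u v => H u v - G u v := by
        gcongr
        exact (neg_le_abs _).trans (abs_setIntegral_deg_sub_le_cutNorm hG hH hS hSI)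

end IsGraphon

/-- if `‖G_N − G‖_□ → 0`, `deg G > 0` a.e. and `deg G⁻¹` is integrable, then on
`Ã_N = {u : deg G_N(u) ≥ deg G(u)/2}` the reciprocal degrees of `G_N` are uniformly
integrable (bounded by `2∫ deg G⁻¹ < ∞`), and `λ([0,1] ∖ Ã_N) → 0`. -/
theorem stmt_9 (G : ℝ → ℝ → ℝ) (GN : ℕ → ℝ → ℝ → ℝ)
    (hG : IsGraphon G) (hGN : ∀ N, IsGraphon (GN N))
    (hpos : ∀ᵐ u ∂(volume.restrict (Set.Icc (0:ℝ) 1)), 0 < deg G u)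
    (hint : ∫⁻ u in Set.Icc (0:ℝ) 1, (ENNReal.ofReal (deg G u))⁻¹ < ⊤)
    (hcut : Filter.Tendsto (fun N => cutNorm fun u v => GN N u v - G u v)
      Filter.atTop (nhds 0)) :
    (∀ N, ∫⁻ u in {u ∈ Set.Icc (0:ℝ) 1 | deg G u / 2 ≤ deg (GN N) u},
          (ENNReal.ofReal (deg (GN N) u))⁻¹ ≤
        2 * ∫⁻ u in Set.Icc (0:ℝ) 1, (ENNReal.ofReal (deg G u))⁻¹) ∧
    (2 * ∫⁻ u in Set.Icc (0:ℝ) 1, (ENNReal.ofReal (deg G u))⁻¹ < ⊤) ∧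
    Filter.Tendsto
      (fun N => volume
        (Set.Icc (0:ℝ) 1 \ {u ∈ Set.Icc (0:ℝ) 1 | deg G u / 2 ≤ deg (GN N) u}))
      Filter.atTop (nhds 0) := by
  set A := fun N => {u ∈ Set.Icc (0:ℝ) 1 | deg G u / 2 ≤ deg (GN N) u}
  set B := fun N => Set.Icc (0:ℝ) 1 \ A N
  have hA (N : ℕ) : MeasurableSet (A N) := measurableSet_Icc.inter <| measurableSet_le
    ((measurable_deg hG.measurable).div_const 2) (measurable_deg (hGN N).measurable)
  have hBI (N : ℕ) : B N ⊆ Set.Icc (0:ℝ) 1 := sdiff_subset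
  refine ⟨fun N => setLIntegral_inv_ofReal_le_two_mul (hA N) (sep_subset _ _) fun u hu => hu.2,
    ENNReal.mul_lt_top (by simp) hint, ?_⟩
  have hB_le (N : ℕ) : ∫⁻ u in B N, ENNReal.ofReal (deg G u) ≤
      ENNReal.ofReal (2 * cutNorm fun u v => GN N u v - G u v) := by
    have hB : MeasurableSet (B N) := measurableSet_Icc.diff (hA N)
    rw [← ofReal_integral_eq_lintegral_ofReal (hG.integrableOn_deg.mono_set (hBI N))
      (ae_restrict_of_forall_mem hB fun u hu => (hG.deg_mem_Icc (hBI N hu)).1)]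
    exact ENNReal.ofReal_le_ofReal <| hG.setIntegral_deg_le_two_mul_cutNorm (hGN N) hB (hBI N)
      fun u hu => (not_le.1 fun h => hu.2 ⟨hu.1, h⟩).le
  have hB_lim : Tendsto (fun N => ∫⁻ u in B N, ENNReal.ofReal (deg G u)) atTop (nhds 0) := by
    have h2c := ENNReal.tendsto_ofReal (by simpa using hcut.const_mul 2)
    rw [ENNReal.ofReal_zero] at h2c
    exact tendsto_of_tendsto_of_tendsto_of_le_of_le tendsto_const_nhds h2c (fun _ => zero_le)
      hB_le
  have hvol := tendsto_measure_zero_of_tendsto_setLIntegral_zero (s := B)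
    (measurable_deg hG.measurable).ennreal_ofReal.aemeasurable
    (hpos.mono fun _ hu => (ENNReal.ofReal_pos.2 hu).ne') (.of_forall fun _ => ofReal_ne_top)
    (by simpa only [Measure.restrict_restrict_of_subset (hBI _)] using hB_lim)
  simpa only [Function.comp_def, Measure.restrict_eq_self _ (hBI _)] using hvol

end
end

section
/- Let n ∈ ℕ, let J_1, …, J_n be intervals covering [0,1], let K > 0, and let G : [0,1]² → [0,1] satisfy |G(u,v) − G(u',v')| ≤ K(|u−u'| + |v−v'|) whenever (u,v) and (u',v') lie in the same block J_i × J_j. For N ∈ ℕ let G_N(u,v) := G(⌈Nu⌉/N, ⌈Nv⌉/N) and u_i := i/N. Then there exists a constant C, depending only on K and n, such that for all N ∈ ℕ and all i ∈ {1,…,N}: | ‖G(u_i,·)‖₁ − ‖G_N(u_i,·)‖₁ | ≤ C/N. -/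
/-!
At a grid point `u = i/N` we have `⌈N u⌉/N = u`, so the row of `G_N` at `u` is the row
`f = G(u,·)` composed with the rounding `v ↦ ⌈N v⌉/N`, which moves `v` up by at most `1/N`.
The row `f` is `K`-Lipschitz on every block `J_j`, so `|f v - f(⌈N v⌉/N)| ≤ K/N` whenever `v` and
its rounding lie in a common block. Otherwise, by order-connectedness, `v` lies in the interval
of length `1/N` just left of `inf J_j`, where `J_j` is the block containing the rounding; these
`n` intervals have total length `n/N`, and on them the rows differ by at most `1`.
-/

open MeasureTheory Set Filter

noncomputable section

/-- The step graphon `G_N(u,v) = G(⌈Nu⌉/N, ⌈Nv⌉/N)` associated with `G`. -/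
def stepG (G : ℝ → ℝ → ℝ) (N : ℕ) (u v : ℝ) : ℝ :=
  G ((⌈(N : ℝ) * u⌉ : ℝ) / N) ((⌈(N : ℝ) * v⌉ : ℝ) / N)

open scoped NNReal

def gridCeil (N : ℕ) (v : ℝ) : ℝ := (⌈(N : ℝ) * v⌉ : ℝ) / N

section gridCeil

variable {N : ℕ}

theorem stepG_eq_gridCeil (G : ℝ → ℝ → ℝ) (u v : ℝ) :
    stepG G N u v = G (gridCeil N u) (gridCeil N v) := rfl

theorem le_gridCeil (hN : 0 < N) (v : ℝ) : v ≤ gridCeil N v := by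
  rw [gridCeil, le_div_iff₀ (by positivity), mul_comm]
  exact Int.le_ceil _

theorem gridCeil_le (hN : 0 < N) (v : ℝ) : gridCeil N v ≤ v + 1 / N := by
  have hN' : (0 : ℝ) < N := by positivity
  rw [gridCeil, div_le_iff₀ hN', add_mul, one_div_mul_cancel hN'.ne', mul_comm]
  exact (Int.ceil_lt_add_one _).le

theorem gridCeil_mem_Icc (hN : 0 < N) {v : ℝ} (hv : v ∈ Icc (0 : ℝ) 1) :
    gridCeil N v ∈ Icc (0 : ℝ) 1 := by
  refine ⟨hv.1.trans (le_gridCeil hN v), ?_⟩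
  have hceil : ⌈(N : ℝ) * v⌉ ≤ N := Int.ceil_le.mpr (by
    push_cast
    nlinarith [hv.2, (Nat.cast_pos.mpr hN : (0 : ℝ) < N)])
  rw [gridCeil, div_le_one (by positivity)]
  exact_mod_cast hceil

theorem gridCeil_natCast_div (hN : 0 < N) (i : ℕ) : gridCeil N (i / N) = i / N := by
  rw [gridCeil, mul_div_cancel₀ _ (by positivity : (N : ℝ) ≠ 0), Int.ceil_natCast]
  rfl

-- `gridCeil N` factors through `ℤ`, where every function is measurable.
theorem measurable_comp_gridCeil {β : Type*} [MeasurableSpace β] (φ : ℝ → β) :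
    Measurable (φ ∘ gridCeil N) :=
  (measurable_from_top (f := fun k : ℤ => φ (k / N))).comp
    (measurable_const.mul measurable_id).ceil

end gridCeil

theorem Set.OrdConnected.mem_Icc_csInf_of_notMem {J : Set ℝ} (hJ : J.OrdConnected)
    {v w δ : ℝ} (hw : w ∈ J) (hvw : v ≤ w) (hwv : w ≤ v + δ) (hv : v ∉ J) :
    v ∈ Icc (sInf J - δ) (sInf J) := by
  have hlt : ∀ x ∈ J, v < x := fun x hx =>
    lt_of_not_ge fun hxv => hv (hJ.out hx hw ⟨hxv, hvw⟩)
  have hinf : sInf J ≤ w := csInf_le ⟨v, fun x hx => (hlt x hx).le⟩ hw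
  exact ⟨by linarith, le_csInf ⟨w, hw⟩ fun x hx => (hlt x hx).le⟩

theorem exists_mem_and_mem_of_notMem_iUnion_Icc {ι : Type*} {J : ι → Set ℝ}
    (hJ : ∀ i, (J i).OrdConnected) {v w δ : ℝ} (hw : w ∈ ⋃ i, J i) (hvw : v ≤ w)
    (hwv : w ≤ v + δ) (hv : v ∉ ⋃ i, Icc (sInf (J i) - δ) (sInf (J i))) :
    ∃ i, v ∈ J i ∧ w ∈ J i := by
  obtain ⟨i, hwi⟩ := mem_iUnion.mp hw
  by_contra! hvi
  exact hv (mem_iUnion.mpr ⟨i, (hJ i).mem_Icc_csInf_of_notMem hwi hvw hwv (hvi i · hwi)⟩)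

theorem measureReal_iUnion_Icc_sub_le {ι : Type*} [Fintype ι] (a : ι → ℝ) {δ : ℝ}
    (hδ : 0 ≤ δ) : volume.real (⋃ i, Icc (a i - δ) (a i)) ≤ Fintype.card ι * δ := by
  calc volume.real (⋃ i, Icc (a i - δ) (a i))
      ≤ ∑ i, volume.real (Icc (a i - δ) (a i)) := measureReal_iUnion_fintype_le _
    _ = Fintype.card ι * δ := by simp [Real.volume_real_Icc, hδ]

theorem abs_integral_sub_le_of_le_add_indicator {α : Type*} [MeasurableSpace α]
    {μ : Measure α} [IsFiniteMeasure μ] {f g : α → ℝ} (hf : Integrable f μ)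
    (hg : Integrable g μ) {ε : ℝ} {S : Set α} (hS : MeasurableSet S)
    (h : ∀ᵐ x ∂μ, |f x - g x| ≤ ε + S.indicator 1 x) :
    |∫ x, f x ∂μ - ∫ x, g x ∂μ| ≤ ε * μ.real univ + μ.real S := by
  have hind : Integrable (S.indicator (1 : α → ℝ)) μ := (integrable_const 1).indicator hS
  calc |∫ x, f x ∂μ - ∫ x, g x ∂μ| = |∫ x, (f x - g x) ∂μ| := by rw [integral_sub hf hg]
    _ ≤ ∫ x, |f x - g x| ∂μ := abs_integral_le_integral_abs
    _ ≤ ∫ x, (ε + S.indicator 1 x) ∂μ :=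
        integral_mono_ae (hf.sub hg).abs ((integrable_const ε).add hind) h
    _ = ε * μ.real univ + μ.real S := by
        rw [integral_add (integrable_const ε) hind, integral_const, integral_indicator_one hS,
          smul_eq_mul, mul_comm]

theorem aemeasurable_restrict_of_continuousOn_cover {α β ι : Type*} [TopologicalSpace α]
    [MeasurableSpace α] [OpensMeasurableSpace α] [TopologicalSpace β] [MeasurableSpace β]
    [BorelSpace β] [Countable ι] {μ : Measure α} {J : ι → Set α} (hJ : ∀ i, MeasurableSet (J i))
    {f : α → β} (hf : ∀ i, ContinuousOn f (J i)) {s : Set α} (hs : s ⊆ ⋃ i, J i) :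
    AEMeasurable f (μ.restrict s) :=
  (aemeasurable_iUnion_iff.mpr fun i => (hf i).aemeasurable (hJ i)).mono_measure
    (Measure.restrict_mono hs le_rfl)

theorem abs_setIntegral_sub_setIntegral_comp_gridCeil_le {ι : Type*} [Fintype ι]
    {J : ι → Set ℝ} (hJ : ∀ i, (J i).OrdConnected) (hcover : Icc (0 : ℝ) 1 ⊆ ⋃ i, J i)
    {f : ℝ → ℝ} (hf01 : MapsTo f (Icc 0 1) (Icc 0 1)) {K : ℝ≥0}
    (hf : ∀ i, LipschitzOnWith K f (J i)) {N : ℕ} (hN : 0 < N) :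
    |(∫ v in Icc (0 : ℝ) 1, f v) - ∫ v in Icc (0 : ℝ) 1, f (gridCeil N v)|
      ≤ (K + Fintype.card ι) / N := by
  set μ := volume.restrict (Icc (0 : ℝ) 1)
  -- Off `S`, the points `v` and `gridCeil N v` lie in a common block.
  set S := ⋃ i, Icc (sInf (J i) - 1 / N) (sInf (J i))
  have hS : MeasurableSet S := MeasurableSet.iUnion fun _ => measurableSet_Icc
  have hbound : ∀ v ∈ Icc (0 : ℝ) 1, ‖f v‖ ≤ 1 := fun v hv => by
    rw [Real.norm_eq_abs, abs_le]
    exact ⟨by linarith [(hf01 hv).1], (hf01 hv).2⟩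
  have hf_int : Integrable f μ :=
    .of_bound (aemeasurable_restrict_of_continuousOn_cover (fun i => (hJ i).measurableSet)
      (fun i => (hf i).continuousOn) hcover).aestronglyMeasurable 1
      (ae_restrict_of_forall_mem measurableSet_Icc hbound)
  have hg_int : Integrable (fun v => f (gridCeil N v)) μ :=
    .of_bound (measurable_comp_gridCeil f).aestronglyMeasurable 1
      (ae_restrict_of_forall_mem measurableSet_Icc fun v hv => hbound _ (gridCeil_mem_Icc hN hv))
  have hpt : ∀ v ∈ Icc (0 : ℝ) 1,
      |f v - f (gridCeil N v)| ≤ K / N + S.indicator 1 v := by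
    intro v hv
    by_cases hvS : v ∈ S
    · have h1 := hf01 hv
      have h2 := hf01 (gridCeil_mem_Icc hN hv)
      have hKN : (0 : ℝ) ≤ K / N := by positivity
      rw [indicator_of_mem hvS, Pi.one_apply, abs_le]
      constructor <;> linarith [h1.1, h1.2, h2.1, h2.2]
    · obtain ⟨i, hvi, hwi⟩ := exists_mem_and_mem_of_notMem_iUnion_Icc hJ
        (hcover (gridCeil_mem_Icc hN hv)) (le_gridCeil hN v) (gridCeil_le hN v) hvS
      have hdist : |v - gridCeil N v| ≤ 1 / N := by
        rw [abs_sub_comm, abs_of_nonneg (sub_nonneg.mpr (le_gridCeil hN v))]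
        linarith [gridCeil_le hN v]
      calc |f v - f (gridCeil N v)| ≤ K * |v - gridCeil N v| := by
            simpa only [Real.dist_eq] using (hf i).dist_le_mul v hvi _ hwi
        _ ≤ K * (1 / N) := mul_le_mul_of_nonneg_left hdist K.2
        _ = K / N + S.indicator 1 v := by rw [indicator_of_notMem hvS]; ring
  have hμ : μ.real univ = 1 := by simp [μ]
  have hμS : μ.real S ≤ Fintype.card ι * (1 / N) :=
    (measureReal_restrict_apply hS).trans_le <| (measureReal_mono inter_subset_left
      (isCompact_iUnion fun _ => isCompact_Icc).measure_lt_top.ne).trans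
      (measureReal_iUnion_Icc_sub_le _ (by positivity))
  calc |(∫ v in Icc (0 : ℝ) 1, f v) - ∫ v in Icc (0 : ℝ) 1, f (gridCeil N v)|
      ≤ K / N * μ.real univ + μ.real S := abs_integral_sub_le_of_le_add_indicator hf_int hg_int hS
        (ae_restrict_of_forall_mem measurableSet_Icc hpt)
    _ ≤ K / N + Fintype.card ι * (1 / N) := by rw [hμ, mul_one]; gcongr
    _ = (K + Fintype.card ι) / N := by ring

/-- for a blockwise `K`-Lipschitz kernel `G : [0,1]² → [0,1]`, the degrees of
the step graphon `G_N` approximate those of `G` at the grid points at rate `C/N`,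
with `C = C(K,n)`. -/
theorem stmt_12 (n : ℕ) (K : ℝ) (hK : 0 < K) :
    ∃ C : ℝ, ∀ (G : ℝ → ℝ → ℝ) (J : Fin n → Set ℝ),
      (∀ i, (J i).OrdConnected) → Set.Icc (0:ℝ) 1 ⊆ (⋃ i, J i) →
      (∀ u ∈ Set.Icc (0:ℝ) 1, ∀ v ∈ Set.Icc (0:ℝ) 1, G u v ∈ Set.Icc (0:ℝ) 1) →
      (∀ i j : Fin n, ∀ u ∈ J i, ∀ u' ∈ J i, ∀ v ∈ J j, ∀ v' ∈ J j,
        |G u v - G u' v'| ≤ K * (|u - u'| + |v - v'|)) →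
      ∀ N i : ℕ, 1 ≤ i → i ≤ N →
        |deg G ((i : ℝ) / N) - deg (stepG G N) ((i : ℝ) / N)| ≤ C / N := by
  refine ⟨K + n, fun G J hJ hcover hG hLip N i hi hiN => ?_⟩
  have hN : 0 < N := by omega
  have hu : (i : ℝ) / N ∈ Icc (0 : ℝ) 1 :=
    ⟨by positivity, div_le_one_of_le₀ (by exact_mod_cast hiN) (Nat.cast_nonneg N)⟩
  obtain ⟨j₀, hj₀⟩ := mem_iUnion.mp (hcover hu)
  have hrow : ∀ j, LipschitzOnWith K.toNNReal (G (i / N)) (J j) := fun j =>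
    .of_dist_le_mul fun v hv v' hv' => by
      simpa [Real.dist_eq, Real.coe_toNNReal K hK.le] using hLip j₀ j _ hj₀ _ hj₀ v hv v' hv'
  have key := abs_setIntegral_sub_setIntegral_comp_gridCeil_le hJ hcover (hG _ hu) hrow hN
  simpa only [deg, stepG_eq_gridCeil, gridCeil_natCast_div hN, Real.coe_toNNReal K hK.le,
    Fintype.card_fin] using key

end
end

section
/- Let G be a graphon and let u, v ∈ [0,1] be such that ‖G(u,·)‖₁ > 0 and ‖G(v,·)‖₁ > 0, and let μ = (μ^w)_{w∈[0,1]} ∈ M(ℝ^d) with M₂ := sup_{w∈[0,1]} ∫ |x|² μ^w(dx). Then W₂²( [Gμ]^u , [Gμ]^v ) ≤ 2 M₂ ∫₀¹ | G(u,w)/‖G(u,·)‖₁ − G(v,w)/‖G(v,·)‖₁ | dw. -/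
open MeasureTheory ENNReal Set Filter

noncomputable section

/-- Squared 2-Wasserstein distance (valued in `ℝ≥0∞`), as the infimum over couplings of the
integral of the squared distance. -/
def W2sq {E : Type} [MeasurableSpace E] [NormedAddCommGroup E] (μ ν : Measure E) : ℝ≥0∞ :=
  ⨅ (π : Measure (E × E)) (_ : π.map Prod.fst = μ ∧ π.map Prod.snd = ν),
    ∫⁻ p, (‖p.1 - p.2‖₊ : ℝ≥0∞) ^ 2 ∂π

/-- 2-Wasserstein distance (valued in `ℝ≥0∞`). -/
def W2 {E : Type} [MeasurableSpace E] [NormedAddCommGroup E] (μ ν : Measure E) : ℝ≥0∞ :=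
  W2sq μ ν ^ (1/2 : ℝ)

/-!
`[Gμ]^u` and `[Gμ]^v` are mixtures of the same family `(μ^w)` with mixing densities
`f = G(u,·)/‖G(u,·)‖₁` and `g = G(v,·)/‖G(v,·)‖₁` on `[0,1]`. Both contain the mixture with
density `min f g`, which is coupled with itself along the diagonal at zero cost. The remainders,
with densities `f - g` and `g - f` of the same mass `ε = ½ ∫ |f - g|`, are coupled by the
normalized product measure; since `|x - y|² ≤ 2|x|² + 2|y|²`, this costs at most
`2 (M₂ ε + M₂ ε) = 2 M₂ ∫ |f - g|`.
-/

lemma coe_nnnorm_sub_sq_le {E : Type*} [SeminormedAddCommGroup E] (x y : E) :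
    (‖x - y‖₊ : ℝ≥0∞) ^ 2 ≤ 2 * ((‖x‖₊ : ℝ≥0∞) ^ 2 + (‖y‖₊ : ℝ≥0∞) ^ 2) := by
  have h : ‖x - y‖₊ ^ 2 ≤ 2 * (‖x‖₊ ^ 2 + ‖y‖₊ ^ 2) :=
    (pow_le_pow_left₀ zero_le (nnnorm_sub_le x y) 2).trans add_sq_le
  exact_mod_cast h

section Coupling

variable {E : Type} [MeasurableSpace E] [NormedAddCommGroup E]

lemma W2sq_le_lintegral {μ ν : Measure E} {π : Measure (E × E)} (h₁ : π.map Prod.fst = μ)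
    (h₂ : π.map Prod.snd = ν) : W2sq μ ν ≤ ∫⁻ p, (‖p.1 - p.2‖₊ : ℝ≥0∞) ^ 2 ∂π :=
  iInf₂_le π ⟨h₁, h₂⟩

lemma W2sq_add_left_le (ν μ₁ μ₂ : Measure E) : W2sq (ν + μ₁) (ν + μ₂) ≤ W2sq μ₁ μ₂ := by
  refine le_iInf₂ fun π ⟨h₁, h₂⟩ => ?_
  have hdiag : Measurable fun x : E => (x, x) := measurable_id.prodMk measurable_id
  set δ := ν.map fun x => (x, x)
  have hδ : ∫⁻ p, (‖p.1 - p.2‖₊ : ℝ≥0∞) ^ 2 ∂δ = 0 :=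
    nonpos_iff_eq_zero.1 ((lintegral_map_le _ _).trans (by simp))
  calc W2sq (ν + μ₁) (ν + μ₂) ≤ ∫⁻ p, (‖p.1 - p.2‖₊ : ℝ≥0∞) ^ 2 ∂(δ + π) := by
        refine W2sq_le_lintegral ?_ ?_
        · rw [Measure.map_add _ _ measurable_fst, h₁, Measure.map_map measurable_fst hdiag]
          exact congrArg (· + μ₁) Measure.map_id
        · rw [Measure.map_add _ _ measurable_snd, h₂, Measure.map_map measurable_snd hdiag]
          exact congrArg (· + μ₂) Measure.map_id
    _ = ∫⁻ p, (‖p.1 - p.2‖₊ : ℝ≥0∞) ^ 2 ∂π := by rw [lintegral_add_measure, hδ, zero_add]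

lemma W2sq_le_of_measure_univ_eq [OpensMeasurableSpace E] {μ ν : Measure E}
    [IsFiniteMeasure μ] [IsFiniteMeasure ν] (h : μ univ = ν univ) :
    W2sq μ ν ≤
      2 * (∫⁻ x, (‖x‖₊ : ℝ≥0∞) ^ 2 ∂μ + ∫⁻ x, (‖x‖₊ : ℝ≥0∞) ^ 2 ∂ν) := by
  set ε := μ univ
  have hsq : Measurable fun x : E => (‖x‖₊ : ℝ≥0∞) ^ 2 :=
    measurable_nnnorm.coe_nnreal_ennreal.pow_const 2
  have hnormalize (ξ : Measure E) (hξ : ξ univ = ε) : ε⁻¹ • ε • ξ = ξ := by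
    rcases eq_or_ne ε 0 with h0 | h0
    · rw [Measure.measure_univ_eq_zero.1 (hξ.trans h0), smul_zero, smul_zero]
    · rw [smul_smul, ENNReal.inv_mul_cancel h0 (measure_ne_top μ univ), one_smul]
  have hfst : ∫⁻ p, (‖p.1‖₊ : ℝ≥0∞) ^ 2 ∂(μ.prod ν) = ε * ∫⁻ x, (‖x‖₊ : ℝ≥0∞) ^ 2 ∂μ := by
    rw [← lintegral_map hsq measurable_fst, Measure.map_fst_prod, ← h, lintegral_smul_measure,
      smul_eq_mul]
  have hsnd : ∫⁻ p, (‖p.2‖₊ : ℝ≥0∞) ^ 2 ∂(μ.prod ν) = ε * ∫⁻ x, (‖x‖₊ : ℝ≥0∞) ^ 2 ∂ν := by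
    rw [← lintegral_map hsq measurable_snd, Measure.map_snd_prod, lintegral_smul_measure,
      smul_eq_mul]
  calc W2sq μ ν ≤ ∫⁻ p, (‖p.1 - p.2‖₊ : ℝ≥0∞) ^ 2 ∂(ε⁻¹ • μ.prod ν) := by
        refine W2sq_le_lintegral ?_ ?_
        · rw [Measure.map_smul, Measure.map_fst_prod, ← h, hnormalize μ rfl]
        · rw [Measure.map_smul, Measure.map_snd_prod, hnormalize ν h.symm]
    _ ≤ ε⁻¹ * ∫⁻ p, 2 * ((‖p.1‖₊ : ℝ≥0∞) ^ 2 + (‖p.2‖₊ : ℝ≥0∞) ^ 2) ∂(μ.prod ν) := by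
        rw [lintegral_smul_measure, smul_eq_mul]
        gcongr with p
        exact coe_nnnorm_sub_sq_le p.1 p.2
    _ = ε⁻¹ * ε * (2 * (∫⁻ x, (‖x‖₊ : ℝ≥0∞) ^ 2 ∂μ + ∫⁻ x, (‖x‖₊ : ℝ≥0∞) ^ 2 ∂ν)) := by
        rw [lintegral_const_mul _ (by fun_prop), lintegral_add_left (by fun_prop), hfst, hsnd]
        ring
    _ ≤ 2 * (∫⁻ x, (‖x‖₊ : ℝ≥0∞) ^ 2 ∂μ + ∫⁻ x, (‖x‖₊ : ℝ≥0∞) ^ 2 ∂ν) :=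
        mul_le_of_le_one_left bot_le (ENNReal.inv_mul_le_one ε)

end Coupling

section Densities

variable {α : Type*} [MeasurableSpace α] (ρ : Measure α) {f g : α → ℝ≥0∞}

lemma withDensity_eq_inf_add_tsub (hf : Measurable f) (hg : Measurable g) :
    ρ.withDensity f = ρ.withDensity (f ⊓ g) + ρ.withDensity (f - g) := by
  rw [← withDensity_add_left (hf.inf hg)]
  congr 1
  funext a
  simp only [Pi.add_apply, Pi.inf_apply, Pi.sub_apply]
  rw [add_comm]
  exact tsub_add_min.symm

lemma lintegral_eq_lintegral_min_add_tsub (hf : Measurable f) (hg : Measurable g) :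
    ∫⁻ a, f a ∂ρ = ∫⁻ a, min (f a) (g a) ∂ρ + ∫⁻ a, f a - g a ∂ρ := by
  rw [← lintegral_add_left (hf.min hg)]
  exact lintegral_congr fun a => by rw [add_comm]; exact tsub_add_min.symm

lemma lintegral_tsub_comm_of_lintegral_eq (hf : Measurable f) (hg : Measurable g)
    (h : ∫⁻ a, f a ∂ρ = ∫⁻ a, g a ∂ρ) (hfin : ∫⁻ a, f a ∂ρ ≠ ∞) :
    ∫⁻ a, f a - g a ∂ρ = ∫⁻ a, g a - f a ∂ρ := by
  have hmin : ∫⁻ a, min (f a) (g a) ∂ρ ≠ ∞ :=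
    ne_top_of_le_ne_top hfin (lintegral_mono fun a => min_le_left _ _)
  refine (ENNReal.add_right_inj hmin).1 ?_
  rw [← lintegral_eq_lintegral_min_add_tsub ρ hf hg]
  simp_rw [min_comm (f _)]
  rw [← lintegral_eq_lintegral_min_add_tsub ρ hg hf, h]

end Densities

section Mixture

variable {α : Type*} [MeasurableSpace α]

lemma Measure.add_bind {β : Type*} [MeasurableSpace β] (σ τ : Measure α) {κ : α → Measure β}
    (hκ : Measurable κ) : (σ + τ).bind κ = σ.bind κ + τ.bind κ := by
  ext s hs
  simp [Measure.bind_apply hs hκ.aemeasurable, lintegral_add_measure]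

lemma Measure.bind_apply_univ_of_ae {β : Type*} [MeasurableSpace β] {σ : Measure α}
    {κ : α → Measure β} (hκ : Measurable κ) (hprob : ∀ᵐ a ∂σ, IsProbabilityMeasure (κ a)) :
    σ.bind κ univ = σ univ := by
  rw [Measure.bind_apply MeasurableSet.univ hκ.aemeasurable, ← lintegral_one]
  exact lintegral_congr_ae (hprob.mono fun a ha => ha.measure_univ)

lemma lintegral_bind_le_iSup_mul {β : Type*} [MeasurableSpace β] {σ : Measure α}
    {κ : α → Measure β} (φ : β → ℝ≥0∞) {S : Set α} (hS : ∀ᵐ a ∂σ, a ∈ S) :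
    ∫⁻ x, φ x ∂(σ.bind κ) ≤ (⨆ a ∈ S, ∫⁻ x, φ x ∂(κ a)) * σ univ := by
  calc ∫⁻ x, φ x ∂(σ.bind κ) ≤ ∫⁻ a, ∫⁻ x, φ x ∂(κ a) ∂σ := Measure.lintegral_bind_le _ _ _
    _ ≤ ∫⁻ _, ⨆ a ∈ S, ∫⁻ x, φ x ∂(κ a) ∂σ :=
        lintegral_mono_ae (hS.mono fun a ha => le_biSup (fun a => ∫⁻ x, φ x ∂(κ a)) ha)
    _ = _ := lintegral_const _

theorem W2sq_add_bind_le {E : Type} [MeasurableSpace E] [NormedAddCommGroup E]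
    [OpensMeasurableSpace E] {σ τ₁ τ₂ : Measure α} {κ : α → Measure E} (hκ : Measurable κ)
    {S : Set α} (hprob : ∀ a ∈ S, IsProbabilityMeasure (κ a)) (h₁ : ∀ᵐ a ∂τ₁, a ∈ S)
    (h₂ : ∀ᵐ a ∂τ₂, a ∈ S) (hmass : τ₁ univ = τ₂ univ) (hfin : τ₁ univ ≠ ∞) :
    W2sq ((σ + τ₁).bind κ) ((σ + τ₂).bind κ) ≤
      2 * (⨆ a ∈ S, ∫⁻ x, (‖x‖₊ : ℝ≥0∞) ^ 2 ∂(κ a)) * (τ₁ univ + τ₂ univ) := by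
  have hmass₁ := Measure.bind_apply_univ_of_ae hκ (h₁.mono hprob)
  have hmass₂ := Measure.bind_apply_univ_of_ae hκ (h₂.mono hprob)
  have : IsFiniteMeasure (τ₁.bind κ) := ⟨by rw [hmass₁]; exact hfin.lt_top⟩
  have : IsFiniteMeasure (τ₂.bind κ) := ⟨by rw [hmass₂, ← hmass]; exact hfin.lt_top⟩
  rw [Measure.add_bind _ _ hκ, Measure.add_bind _ _ hκ]
  calc _ ≤ W2sq (τ₁.bind κ) (τ₂.bind κ) := W2sq_add_left_le _ _ _
    _ ≤ 2 * (∫⁻ x, (‖x‖₊ : ℝ≥0∞) ^ 2 ∂(τ₁.bind κ) + ∫⁻ x, (‖x‖₊ : ℝ≥0∞) ^ 2 ∂(τ₂.bind κ)) :=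
        W2sq_le_of_measure_univ_eq (by rw [hmass₁, hmass₂, hmass])
    _ ≤ 2 * ((⨆ a ∈ S, ∫⁻ x, (‖x‖₊ : ℝ≥0∞) ^ 2 ∂(κ a)) * τ₁ univ +
          (⨆ a ∈ S, ∫⁻ x, (‖x‖₊ : ℝ≥0∞) ^ 2 ∂(κ a)) * τ₂ univ) := by
        gcongr <;> exact lintegral_bind_le_iSup_mul _ ‹_›
    _ = _ := by ring

theorem W2sq_withDensity_bind_le {E : Type} [MeasurableSpace E] [NormedAddCommGroup E]
    [OpensMeasurableSpace E] {ρ : Measure α} {f g : α → ℝ≥0∞} (hf : Measurable f)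
    (hg : Measurable g) (h : ∫⁻ a, f a ∂ρ = ∫⁻ a, g a ∂ρ) (hfin : ∫⁻ a, f a ∂ρ ≠ ∞)
    {κ : α → Measure E} (hκ : Measurable κ) {S : Set α}
    (hprob : ∀ a ∈ S, IsProbabilityMeasure (κ a)) (hS : ∀ᵐ a ∂ρ, a ∈ S) :
    W2sq ((ρ.withDensity f).bind κ) ((ρ.withDensity g).bind κ) ≤
      2 * (⨆ a ∈ S, ∫⁻ x, (‖x‖₊ : ℝ≥0∞) ^ 2 ∂(κ a)) * ∫⁻ a, (f a - g a) + (g a - f a) ∂ρ := by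
  have hconc (φ : α → ℝ≥0∞) : ∀ᵐ a ∂ρ.withDensity φ, a ∈ S :=
    (withDensity_absolutelyContinuous ρ φ).ae_le hS
  rw [withDensity_eq_inf_add_tsub ρ hf hg, withDensity_eq_inf_add_tsub ρ hg hf, inf_comm g f]
  refine (W2sq_add_bind_le hκ hprob (hconc _) (hconc _) ?_ ?_).trans_eq ?_
  · simpa [withDensity_apply] using lintegral_tsub_comm_of_lintegral_eq ρ hf hg h hfin
  · simpa [withDensity_apply] using
      ne_top_of_le_ne_top hfin (lintegral_mono fun a => tsub_le_self)
  · simp only [withDensity_apply _ MeasurableSet.univ, Measure.restrict_univ, Pi.sub_apply]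
    rw [lintegral_add_left (f := fun a => f a - g a) (hf.sub hg)]

end Mixture

lemma ENNReal.ofReal_tsub_add_ofReal_tsub {a b : ℝ} (ha : 0 ≤ a) (hb : 0 ≤ b) :
    ENNReal.ofReal a - ENNReal.ofReal b + (ENNReal.ofReal b - ENNReal.ofReal a) =
      ENNReal.ofReal |a - b| := by
  rw [← ENNReal.ofReal_sub _ hb, ← ENNReal.ofReal_sub _ ha]
  rcases le_total a b with h | h
  · rw [ENNReal.ofReal_of_nonpos (sub_nonpos.2 h), zero_add, abs_sub_comm,
      abs_of_nonneg (sub_nonneg.2 h)]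
  · rw [ENNReal.ofReal_of_nonpos (sub_nonpos.2 h), add_zero, abs_of_nonneg (sub_nonneg.2 h)]

section Graphon

variable {G : ℝ → ℝ → ℝ}

def rowDensity (G : ℝ → ℝ → ℝ) (u w : ℝ) : ℝ≥0∞ :=
  ENNReal.ofReal (G u w) / ENNReal.ofReal (deg G u)

lemma graphonAvg_eq_bind {d : ℕ} (μ : ℝ → Measure (Ed d)) (u : ℝ) :
    graphonAvg G μ u = ((volume.restrict (Icc 0 1)).withDensity (rowDensity G u)).bind μ :=
  rfl

lemma IsGraphon.measurable_rowDensity (hG : IsGraphon G) (u : ℝ) :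
    Measurable (rowDensity G u) :=
  (ENNReal.measurable_ofReal.comp (hG.measurable.comp measurable_prodMk_left)).div_const _

lemma rowDensity_eq_ofReal_div {u : ℝ} (hdu : 0 < deg G u) (w : ℝ) :
    rowDensity G u w = ENNReal.ofReal (G u w / deg G u) :=
  (ENNReal.ofReal_div_of_pos hdu).symm

lemma IsGraphon.setLIntegral_rowDensity (hG : IsGraphon G) {u : ℝ} (hu : u ∈ Icc (0 : ℝ) 1)
    (hdu : 0 < deg G u) : ∫⁻ w in Icc 0 1, rowDensity G u w = 1 := by
  have hGu : Integrable (G u) (volume.restrict (Icc 0 1)) := by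
    refine Integrable.mono' (integrable_const 1)
      (hG.measurable.comp measurable_prodMk_left).aestronglyMeasurable ?_
    filter_upwards [ae_restrict_mem measurableSet_Icc] with w hw
    rw [Real.norm_eq_abs, abs_of_nonneg (hG.mem_Icc u hu w hw).1]
    exact (hG.mem_Icc u hu w hw).2
  have hnonneg : 0 ≤ᵐ[volume.restrict (Icc 0 1)] G u := by
    filter_upwards [ae_restrict_mem measurableSet_Icc] with w hw
    exact (hG.mem_Icc u hu w hw).1
  simp_rw [rowDensity, div_eq_mul_inv]
  rw [lintegral_mul_const' _ _ (by simp [hdu]), ← ofReal_integral_eq_lintegral_ofReal hGu hnonneg]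
  exact ENNReal.mul_inv_cancel (ENNReal.ofReal_pos.2 hdu).ne' ENNReal.ofReal_ne_top

end Graphon

/-- continuity estimate in the label: the squared Wasserstein distance between
`[Gμ]^u` and `[Gμ]^v` is bounded by `2 M₂ ∫₀¹ |G(u,w)/‖G(u,·)‖₁ − G(v,w)/‖G(v,·)‖₁| dw`,
where `M₂` is the uniform second moment of the family `μ`. -/
theorem stmt_14 {d : ℕ} (G : ℝ → ℝ → ℝ) (hG : IsGraphon G)
    (u v : ℝ) (hu : u ∈ Set.Icc (0:ℝ) 1) (hv : v ∈ Set.Icc (0:ℝ) 1)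
    (hdu : 0 < deg G u) (hdv : 0 < deg G v)
    (μ : ℝ → Measure (Ed d)) (hμ : MemM d μ) :
    W2sq (graphonAvg G μ u) (graphonAvg G μ v) ≤
      2 * (⨆ w ∈ Set.Icc (0:ℝ) 1, ∫⁻ x, (‖x‖₊ : ℝ≥0∞) ^ 2 ∂(μ w)) *
        ∫⁻ w in Set.Icc (0:ℝ) 1,
          ENNReal.ofReal |G u w / deg G u - G v w / deg G v| := by
  have hf1 := hG.setLIntegral_rowDensity hu hdu
  refine (W2sq_withDensity_bind_le (hG.measurable_rowDensity u) (hG.measurable_rowDensity v)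
    (hf1.trans (hG.setLIntegral_rowDensity hv hdv).symm) (hf1 ▸ one_ne_top)
    (Measure.measurable_of_measurable_coe μ hμ.meas) hμ.prob
    (ae_restrict_mem measurableSet_Icc)).trans_eq ?_
  congr 1
  refine setLIntegral_congr_fun measurableSet_Icc fun w hw => ?_
  rw [rowDensity_eq_ofReal_div hdu, rowDensity_eq_ofReal_div hdv]
  exact ENNReal.ofReal_tsub_add_ofReal_tsub (div_nonneg (hG.mem_Icc u hu w hw).1 hdu.le)
    (div_nonneg (hG.mem_Icc v hv w hw).1 hdv.le)

end
end
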